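/- arXiv:1711.04296 — 3 statements merged into one kernel-verified Lean document; each statement's English description precedes it below -/
import Mathlib

section
/- Let K be a field, ν a valuation on K[x] with trivial support, K̄ an algebraic closure of K, and μ an extension of ν to K̄[x]. Let Q ∈ K[x] be a monic irreducible polynomial and choose a root a of Q in K̄ such that μ(x−a) = δ(Q). Then Q is a key polynomial for ν if and only if (a, δ(Q)) is a minimal pair for ν. -/
open Polynomial

section KeyPolyDefs

variable {K : Type*} [Field K] {Γ : Type*} [AddCommGroup Γ] [LinearOrder Γ] [IsOrderedAddMonoid Γ]

/-- The value `ν f` read in `Γ` (junk value `0` when `ν f = ⊤`). -/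
noncomputable def aval (ν : AddValuation (Polynomial K) (WithTop Γ)) (f : Polynomial K) : Γ :=
  WithTop.untopD 0 (ν f)

/-- `ν` has trivial support: only `0` has value `⊤`. -/
def TrivialSupport (ν : AddValuation (Polynomial K) (WithTop Γ)) : Prop :=
  ∀ f : Polynomial K, ν f = ⊤ → f = 0

/-- The set of indices `r`, `1 ≤ r ≤ deg f` with `∂_r f ≠ 0`, over which `ε(f)` is computed. -/
noncomputable def epsSupport (f : Polynomial K) : Finset ℕ :=
  @Finset.filter _ (fun r => f.hasseDeriv r ≠ 0) (Classical.decPred _) (Finset.Icc 1 f.natDegree)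

/-- `ε(f) = max_{r ≥ 1} (ν f - ν ∂_r f) / r`, computed in the divisible group `Γ`. -/
noncomputable def eps [Module ℚ Γ] (ν : AddValuation (Polynomial K) (WithTop Γ))
    (f : Polynomial K) : Γ :=
  if h : (epsSupport f).Nonempty then
    (epsSupport f).sup' h fun r => ((r : ℚ)⁻¹) • (aval ν f - aval ν (f.hasseDeriv r))
  else 0

/-- `Q` is a key polynomial for `ν`: `Q` is monic and every `f` with `ε(f) ≥ ε(Q)` satisfies
`deg f ≥ deg Q`. -/
def IsKeyPoly [Module ℚ Γ] (ν : AddValuation (Polynomial K) (WithTop Γ))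
    (Q : Polynomial K) : Prop :=
  Q.Monic ∧ 0 < Q.natDegree ∧
    ∀ f : Polynomial K, 0 < f.natDegree → eps ν Q ≤ eps ν f → Q.natDegree ≤ f.natDegree

/-- The `i`-th coefficient of the `q`-expansion of a polynomial. -/
noncomputable def qCoeff (q : Polynomial K) : ℕ → Polynomial K → Polynomial K
  | 0, p => p % q
  | n + 1, p => qCoeff q n (p / q)

/-- The `q`-truncation `ν_q` of `ν`:  `ν_q(p) = min_i ν(p_i q^i)` where `p = Σ p_i q^i`
is the `q`-expansion of `p`. -/
noncomputable def trunc (ν : AddValuation (Polynomial K) (WithTop Γ)) (q p : Polynomial K) :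
    WithTop Γ :=
  (Finset.range (p.natDegree + 1)).inf fun i => ν (qCoeff q i p * q ^ i)

variable {L : Type*} [Field L] [Algebra K L]

/-- `δ(f)`: the maximal value `μ(x - a)` over the roots `a` of `f` in `L`
(junk value `0` if `f` has no roots in `L`). -/
noncomputable def delta (μ : AddValuation (Polynomial L) (WithTop Γ)) (f : Polynomial K) : Γ :=
  letI := Classical.decEq L
  if h : ((f.map (algebraMap K L)).roots.toFinset).Nonempty then
    ((f.map (algebraMap K L)).roots.toFinset).sup' h fun a => aval μ (X - C a)
  else 0

/-- `μ` on `L[x]` extends `ν` on `K[x]`. -/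
def IsExtension (μ : AddValuation (Polynomial L) (WithTop Γ))
    (ν : AddValuation (Polynomial K) (WithTop Γ)) : Prop :=
  ∀ f : Polynomial K, μ (f.map (algebraMap K L)) = ν f

/-- `w` on `K(x)` extends `ν` on `K[x]`. -/
def ExtendsToRatFunc (w : AddValuation (RatFunc K) (WithTop Γ))
    (ν : AddValuation (Polynomial K) (WithTop Γ)) : Prop :=
  ∀ p : Polynomial K, w (algebraMap (Polynomial K) (RatFunc K) p) = ν p

/-- The residue of `f` is transcendental over the residue field `Kν`:  every polynomial with
coefficients in the valuation ring of `K`, at least one of which is a unit, keeps value `0`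
when evaluated at `f`. -/
def ResidueTranscendentalElem (w : AddValuation (RatFunc K) (WithTop Γ)) (f : RatFunc K) : Prop :=
  ∀ (n : ℕ) (c : ℕ → K),
    (∀ i ≤ n, 0 ≤ w (algebraMap K (RatFunc K) (c i))) →
    (∃ i ≤ n, w (algebraMap K (RatFunc K) (c i)) = 0) →
    w (∑ i ∈ Finset.range (n + 1), algebraMap K (RatFunc K) (c i) * f ^ i) = 0

/-- The residue of `g` is algebraic over the residue field `Kν`: some polynomial with
coefficients in the valuation ring of `K`, at least one of which is a unit, gets positive
value when evaluated at `g`. -/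
def ResidueAlgebraicElem (w : AddValuation (RatFunc K) (WithTop Γ)) (g : RatFunc K) : Prop :=
  ∃ (n : ℕ) (c : ℕ → K),
    (∀ i ≤ n, 0 ≤ w (algebraMap K (RatFunc K) (c i))) ∧
    (∃ i ≤ n, w (algebraMap K (RatFunc K) (c i)) = 0) ∧
    0 < w (∑ i ∈ Finset.range (n + 1), algebraMap K (RatFunc K) (c i) * g ^ i)

/-- `w` is residue-transcendental: some `f` with `w f = 0` has transcendental residue. -/
def IsResidueTranscendental (w : AddValuation (RatFunc K) (WithTop Γ)) : Prop :=
  ∃ f : RatFunc K, w f = 0 ∧ ResidueTranscendentalElem w f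

/-- `w` is value-transcendental: some value `w f` is torsion-free over the value group
`νK` of `K`, i.e. `n ν(f) ∉ νK` for every `n ≥ 1`. -/
def IsValueTranscendental (w : AddValuation (RatFunc K) (WithTop Γ)) : Prop :=
  ∃ f : RatFunc K, f ≠ 0 ∧
    ∀ n : ℕ, 0 < n → ∀ c : K, c ≠ 0 → w (f ^ n) ≠ w (algebraMap K (RatFunc K) c)

/-- `w` is valuation-transcendental: it is value-transcendental or residue-transcendental. -/
def IsValuationTranscendental (w : AddValuation (RatFunc K) (WithTop Γ)) : Prop :=
  IsValueTranscendental w ∨ IsResidueTranscendental w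

end KeyPolyDefs

section MinimalPairDefs

variable {Γ : Type*} [AddCommGroup Γ] [LinearOrder Γ] [IsOrderedAddMonoid Γ] {L : Type*} [Field L]

/-- `(a, d)` is a minimal pair for the valuation (w.r.t. the extension `μ` to `L[x]`):
every `b` with `μ(b - a) ≥ d` satisfies `[K(b) : K] ≥ [K(a) : K]`. -/
def IsMinimalPair (K : Type*) [Field K] [Algebra K L]
    (μ : AddValuation (Polynomial L) (WithTop Γ)) (a : L) (d : Γ) : Prop :=
  ∀ b : L, (d : WithTop Γ) ≤ μ (C (b - a)) →
    (minpoly K a).natDegree ≤ (minpoly K b).natDegree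

/-- `(a, d)` is a minimal pair of definition: a minimal pair with `μ(x - a) = d ≥ μ(x - b)`
for every `b ∈ L`. -/
def IsMinimalPairOfDefinition (K : Type*) [Field K] [Algebra K L]
    (μ : AddValuation (Polynomial L) (WithTop Γ)) (a : L) (d : Γ) : Prop :=
  IsMinimalPair K μ a d ∧ μ (X - C a) = (d : WithTop Γ) ∧
    ∀ b : L, μ (X - C b) ≤ (d : WithTop Γ)

end MinimalPairDefs

/-!
Over the algebraically closed field `L` write `f = c ∏ᵢ (x - bᵢ)`. The Hasse derivatives are
`∂ᵣ f = c ∑_{#t = r} ∏_{i ∉ t} (x - bᵢ)`, so with `δ = δ(f) = maxᵢ μ(x - bᵢ)` every summand has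
value at least `ν f - r δ`, and for `r` the number of roots with `μ(x - bᵢ) = δ` exactly one summand
attains this bound. Hence `ε(f) = δ(f)` for every non-constant `f`. Both conditions of the theorem
then compare `δ` of minimal polynomials, and since `μ(x - a) = δ(Q)`, the ultrametric inequality
makes `μ(b - a) ≥ δ(Q)` equivalent to `μ(x - b) ≥ δ(Q)`.
-/

open Polynomial Finset

namespace Polynomial

variable {R : Type*} [CommRing R]

theorem hasseDeriv_succ_X_sub_C_mul (c : R) (p : R[X]) (r : ℕ) :
    hasseDeriv (r + 1) ((X - C c) * p) = (X - C c) * hasseDeriv (r + 1) p + hasseDeriv r p := by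
  have hvanish : ∀ k ∈ range (r + 2), k ∉ ({0, 1} : Finset ℕ) →
      hasseDeriv k (X - C c) * hasseDeriv (r + 1 - k) p = 0 := by
    intro k _ hk
    simp only [mem_insert, mem_singleton, not_or] at hk
    rw [map_sub, hasseDeriv_X (R := R) (k := k) (by omega), hasseDeriv_C (k := k) c (by omega),
      sub_zero, zero_mul]
  rw [hasseDeriv_mul, Nat.sum_antidiagonal_eq_sum_range_succ_mk,
    ← sum_subset (by intro k hk; simp at hk ⊢; omega) hvanish, sum_pair zero_ne_one]
  simp

theorem hasseDeriv_prod_X_sub_C {ι : Type*} [DecidableEq ι] (s : Finset ι) (b : ι → R) (r : ℕ) :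
    hasseDeriv r (∏ i ∈ s, (X - C (b i))) = ∑ t ∈ s.powersetCard r, ∏ i ∈ s \ t, (X - C (b i)) := by
  induction s using Finset.induction generalizing r with
  | empty => cases r <;> simp [hasseDeriv_apply_one]
  | @insert j s hj ih =>
    cases r with
    | zero => simp
    | succ r =>
      have hjt : ∀ t ∈ s.powersetCard r, j ∉ t := fun t ht h => hj ((mem_powersetCard.mp ht).1 h)
      rw [prod_insert hj, hasseDeriv_succ_X_sub_C_mul, ih, ih, powersetCard_succ_insert hj,
        sum_union, sum_image fun t ht u hu h => by
          rw [← erase_insert (hjt t ht), ← erase_insert (hjt u hu), h]]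
      · congr 1
        · rw [mul_sum]
          refine sum_congr rfl fun t ht => ?_
          rw [insert_sdiff_of_notMem s (fun h => hj ((mem_powersetCard.mp ht).1 h)),
            prod_insert (by simp [hj])]
        · refine sum_congr rfl fun t _ => ?_
          rw [insert_sdiff_insert, sdiff_insert_of_notMem hj]
      · refine disjoint_right.mpr fun t ht ht' => ?_
        obtain ⟨u, -, rfl⟩ := mem_image.mp ht
        exact hj ((mem_powersetCard.mp ht').1 (mem_insert_self j u))

theorem hasseDeriv_map {S : Type*} [CommRing S] (φ : R →+* S) (r : ℕ) (f : R[X]) :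
    hasseDeriv r (f.map φ) = (hasseDeriv r f).map φ := by
  ext n
  simp [hasseDeriv_coeff, coeff_map]

theorem Splits.eq_C_mul_prod_toEnumFinset {K : Type*} [Field K] [DecidableEq K] {F : K[X]}
    (hF : F.Splits) :
    F = C F.leadingCoeff * ∏ x ∈ F.roots.toEnumFinset, (X - C x.1) := by
  conv_lhs => rw [hF.eq_prod_roots, ← Multiset.map_toEnumFinset_fst F.roots, Multiset.map_map]
  rfl

end Polynomial

namespace AddValuation

variable {R Γ ι : Type*} [CommRing R] [AddCommGroup Γ] [LinearOrder Γ] [IsOrderedAddMonoid Γ]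
  (μ : AddValuation R (WithTop Γ))

theorem map_prod (s : Finset ι) (p : ι → R) : μ (∏ i ∈ s, p i) = ∑ i ∈ s, μ (p i) := by
  classical
  induction s using Finset.induction with
  | empty => simp
  | @insert j s hj ih => rw [prod_insert hj, sum_insert hj, map_mul, ih]

variable [DecidableEq ι] {s : Finset ι} {p : ι → R} {v : ι → Γ}

theorem map_prod_sdiff (hv : ∀ i ∈ s, μ (p i) = v i) {t : Finset ι} (ht : t ⊆ s) :
    μ (∏ i ∈ s \ t, p i) = ((∑ i ∈ s, v i - ∑ i ∈ t, v i : Γ) : WithTop Γ) := by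
  rw [map_prod, ← sum_sdiff_eq_sub ht, WithTop.coe_sum]
  exact sum_congr rfl fun i hi => hv i (mem_sdiff.mp hi).1

variable {δ : Γ}

theorem sum_sub_nsmul_le_map_sum_prod_sdiff (hv : ∀ i ∈ s, μ (p i) = v i)
    (hδ : ∀ i ∈ s, v i ≤ δ) (r : ℕ) :
    ((∑ i ∈ s, v i - r • δ : Γ) : WithTop Γ) ≤
      μ (∑ t ∈ s.powersetCard r, ∏ i ∈ s \ t, p i) := by
  refine μ.map_le_sum fun t ht => ?_
  obtain ⟨hts, rfl⟩ := mem_powersetCard.mp ht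
  rw [map_prod_sdiff μ hv hts, WithTop.coe_le_coe]
  exact sub_le_sub_left (sum_le_card_nsmul t v δ fun i hi => hδ i (hts hi)) _

/-- For `r = #{i | v i = δ}` the summand indexed by `{i | v i = δ}` is the unique one of minimal
value. -/
theorem map_sum_prod_sdiff_eq (hv : ∀ i ∈ s, μ (p i) = v i) (hδ : ∀ i ∈ s, v i ≤ δ) :
    μ (∑ t ∈ s.powersetCard #{i ∈ s | v i = δ}, ∏ i ∈ s \ t, p i) =
      ((∑ i ∈ s, v i - #{i ∈ s | v i = δ} • δ : Γ) : WithTop Γ) := by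
  set T := {i ∈ s | v i = δ}
  have hTs : T ⊆ s := filter_subset _ s
  have hTval : μ (∏ i ∈ s \ T, p i) = ((∑ i ∈ s, v i - #T • δ : Γ) : WithTop Γ) := by
    rw [map_prod_sdiff μ hv hTs, sum_eq_card_nsmul fun i hi => (mem_filter.mp hi).2]
  have hlt : ∀ t ∈ (s.powersetCard #T).erase T, μ (∏ i ∈ s \ T, p i) < μ (∏ i ∈ s \ t, p i) := by
    intro t ht
    obtain ⟨htT, hts, hcard⟩ : t ≠ T ∧ t ⊆ s ∧ #t = #T := by
      simpa only [mem_erase, mem_powersetCard] using ht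
    obtain ⟨j, hjt, hjT⟩ := not_subset.mp fun h => htT (eq_of_subset_of_card_le h hcard.ge)
    have hj : v j < δ := (hδ j (hts hjt)).lt_of_ne fun h => hjT (mem_filter.mpr ⟨hts hjt, h⟩)
    have hsum : ∑ i ∈ t, v i < #T • δ := by
      calc ∑ i ∈ t, v i < ∑ _i ∈ t, δ := sum_lt_sum (fun i hi => hδ i (hts hi)) ⟨j, hjt, hj⟩
        _ = #T • δ := by rw [sum_const, hcard]
    rw [hTval, map_prod_sdiff μ hv hts, WithTop.coe_lt_coe]
    exact sub_lt_sub_left hsum _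
  rw [← add_sum_erase _ _ (mem_powersetCard.mpr ⟨hTs, rfl⟩),
    map_add_eq_of_lt_left μ (μ.map_lt_sum (hTval ▸ WithTop.coe_ne_top) hlt), hTval]

end AddValuation

theorem AddValuation.le_map_C_sub_iff {R Γ₀ : Type*} [CommRing R]
    [LinearOrderedAddCommMonoidWithTop Γ₀] (μ : AddValuation R[X] Γ₀) {a b : R} {d : Γ₀}
    (ha : d ≤ μ (X - C a)) : d ≤ μ (C (b - a)) ↔ d ≤ μ (X - C b) := by
  constructor <;> intro h
  · rw [show X - C b = (X - C a) - C (b - a) by rw [C_sub]; ring]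
    exact μ.map_le_sub ha h
  · rw [show C (b - a) = (X - C a) - (X - C b) by rw [C_sub]; ring]
    exact μ.map_le_sub ha h

theorem inv_natCast_smul_le_iff {Γ : Type*} [AddCommGroup Γ] [LinearOrder Γ]
    [IsOrderedAddMonoid Γ] [Module ℚ Γ] {n : ℕ} (hn : n ≠ 0) {x y : Γ} :
    (n : ℚ)⁻¹ • x ≤ y ↔ x ≤ n • y := by
  conv_rhs => rw [← smul_inv_smul₀ (Nat.cast_ne_zero.mpr hn : (n : ℚ) ≠ 0) x,
    Nat.cast_smul_eq_nsmul]
  exact (nsmul_le_nsmul_iff_right hn).symm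

section

variable {K : Type*} [Field K] {Γ : Type*} [AddCommGroup Γ] [LinearOrder Γ] [IsOrderedAddMonoid Γ]

theorem coe_aval_of_ne_zero {ν : AddValuation K[X] (WithTop Γ)} (hν : TrivialSupport ν)
    {p : K[X]} (hp : p ≠ 0) : ((aval ν p : Γ) : WithTop Γ) = ν p := by
  obtain ⟨g, hg⟩ := WithTop.ne_top_iff_exists.mp fun h => hp (hν p h)
  rw [aval, ← hg]
  rfl

theorem mem_epsSupport {f : K[X]} {r : ℕ} :
    r ∈ epsSupport f ↔ (1 ≤ r ∧ r ≤ f.natDegree) ∧ hasseDeriv r f ≠ 0 := by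
  rw [epsSupport, @mem_filter _ _ (Classical.decPred _), mem_Icc]

theorem eps_eq_of_forall_le_of_eq [Module ℚ Γ] {ν : AddValuation K[X] (WithTop Γ)}
    (hν : TrivialSupport ν) {f : K[X]} {d : Γ}
    (hle : ∀ r, ((aval ν f - r • d : Γ) : WithTop Γ) ≤ ν (hasseDeriv r f))
    {r₀ : ℕ} (hr₀ : r₀ ≠ 0) (heq : ν (hasseDeriv r₀ f) = ((aval ν f - r₀ • d : Γ) : WithTop Γ)) :
    eps ν f = d := by
  have hD₀ : hasseDeriv r₀ f ≠ 0 := fun h => WithTop.coe_ne_top (heq ▸ h ▸ ν.map_zero)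
  have hr₀f : r₀ ∈ epsSupport f := mem_epsSupport.mpr ⟨⟨Nat.one_le_iff_ne_zero.mpr hr₀,
    not_lt.mp fun h => hD₀ (hasseDeriv_eq_zero_of_lt_natDegree f r₀ h)⟩, hD₀⟩
  rw [eps, dif_pos ⟨r₀, hr₀f⟩]
  refine le_antisymm (sup'_le _ _ fun r hr => ?_) ?_
  · rw [mem_epsSupport] at hr
    have h := hle r
    rw [← coe_aval_of_ne_zero hν hr.2, WithTop.coe_le_coe, sub_le_comm] at h
    exact (inv_natCast_smul_le_iff (by omega)).mpr h
  · refine le_of_eq_of_le ?_ (le_sup' _ hr₀f)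
    rw [← coe_aval_of_ne_zero hν hD₀, WithTop.coe_inj] at heq
    rw [heq, sub_sub_cancel, ← Nat.cast_smul_eq_nsmul ℚ,
      inv_smul_smul₀ (Nat.cast_ne_zero.mpr hr₀)]

variable {L : Type*} [Field L] [Algebra K L] {μ : AddValuation L[X] (WithTop Γ)}

theorem map_X_sub_C_le_delta (hμ : TrivialSupport μ) {f : K[X]} (hf : f ≠ 0) {c : L}
    (hc : aeval c f = 0) : μ (X - C c) ≤ delta μ f := by
  classical
  have hmem : c ∈ (f.map (algebraMap K L)).roots.toFinset :=
    Multiset.mem_toFinset.mpr (mem_aroots.mpr ⟨hf, hc⟩)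
  rw [delta, dif_pos ⟨c, hmem⟩, ← coe_aval_of_ne_zero hμ (X_sub_C_ne_zero c), WithTop.coe_le_coe]
  exact le_sup' (fun x => aval μ (X - C x)) hmem

theorem exists_root_map_X_sub_C_eq_delta [IsAlgClosed L] (hμ : TrivialSupport μ) {f : K[X]}
    (hf : 0 < f.natDegree) : ∃ c : L, aeval c f = 0 ∧ μ (X - C c) = delta μ f := by
  classical
  have hf0 : f ≠ 0 := ne_zero_of_natDegree_gt hf
  obtain ⟨c, hc⟩ := IsAlgClosed.exists_aeval_eq_zero L f (degree_ne_of_natDegree_ne hf.ne')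
  have hne : (f.map (algebraMap K L)).roots.toFinset.Nonempty :=
    ⟨c, Multiset.mem_toFinset.mpr (mem_aroots.mpr ⟨hf0, hc⟩)⟩
  obtain ⟨c₀, hc₀, hmax⟩ := exists_mem_eq_sup' hne fun x => aval μ (X - C x)
  refine ⟨c₀, (mem_aroots.mp (Multiset.mem_toFinset.mp hc₀)).2, ?_⟩
  rw [delta, dif_pos hne, hmax, coe_aval_of_ne_zero hμ (X_sub_C_ne_zero c₀)]

theorem eps_eq_delta [Module ℚ Γ] [IsAlgClosed L] {ν : AddValuation K[X] (WithTop Γ)}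
    (hν : TrivialSupport ν) (hμ : TrivialSupport μ) (hext : IsExtension μ ν) {f : K[X]}
    (hf : 0 < f.natDegree) : eps ν f = delta μ f := by
  classical
  have hf0 : f ≠ 0 := ne_zero_of_natDegree_gt hf
  set F := f.map (algebraMap K L)
  set c := F.leadingCoeff
  have hc : C c ≠ 0 := C_ne_zero.mpr (leadingCoeff_ne_zero.mpr (Polynomial.map_ne_zero hf0))
  set s := F.roots.toEnumFinset
  have hF : F = C c * ∏ x ∈ s, (X - C x.1) := (IsAlgClosed.splits F).eq_C_mul_prod_toEnumFinset
  set v : L × ℕ → Γ := fun x => aval μ (X - C x.1)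
  have hv : ∀ x ∈ s, μ (X - C x.1) = v x := fun x _ =>
    (coe_aval_of_ne_zero hμ (X_sub_C_ne_zero _)).symm
  have hδ : ∀ x ∈ s, v x ≤ delta μ f := fun x hx => by
    rw [← WithTop.coe_le_coe, ← hv x hx]
    exact map_X_sub_C_le_delta hμ hf0 (mem_aroots.mp (Multiset.mem_of_mem_toEnumFinset hx)).2
  have hD : ∀ r, ν (hasseDeriv r f) = μ (C c) +
      μ (∑ t ∈ s.powersetCard r, ∏ x ∈ s \ t, (X - C x.1)) := fun r => by
    rw [show ν (hasseDeriv r f) = μ (hasseDeriv r F) by rw [← hext, hasseDeriv_map], hF,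
      ← smul_eq_C_mul, map_smul, hasseDeriv_prod_X_sub_C, smul_eq_C_mul, μ.map_mul]
  have hνf : aval ν f = aval μ (C c) + ∑ x ∈ s, v x := by
    have : ν f = ((aval μ (C c) + ∑ x ∈ s, v x : Γ) : WithTop Γ) := by
      rw [show ν f = μ F from (hext f).symm, hF, μ.map_mul, μ.map_prod, WithTop.coe_add,
        WithTop.coe_sum, coe_aval_of_ne_zero hμ hc, sum_congr rfl hv]
    rw [aval, this]
    rfl
  have hT : #{x ∈ s | v x = delta μ f} ≠ 0 := by
    obtain ⟨b, hb, hbδ⟩ := exists_root_map_X_sub_C_eq_delta hμ hf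
    have hbs : (b, 0) ∈ s := by
      rw [Multiset.mem_toEnumFinset, Multiset.count_pos]
      exact mem_aroots.mpr ⟨hf0, hb⟩
    refine card_ne_zero.mpr ⟨(b, 0), mem_filter.mpr ⟨hbs, ?_⟩⟩
    rw [← WithTop.coe_inj, ← hv _ hbs, hbδ]
  refine eps_eq_of_forall_le_of_eq hν (fun r => ?_) hT ?_
  · rw [hD, hνf, add_sub_assoc, WithTop.coe_add, coe_aval_of_ne_zero hμ hc]
    exact add_le_add le_rfl (μ.sum_sub_nsmul_le_map_sum_prod_sdiff hv hδ r)
  · rw [hD, μ.map_sum_prod_sdiff_eq hv hδ, hνf, add_sub_assoc, WithTop.coe_add,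
      coe_aval_of_ne_zero hμ hc]

end

theorem isKeyPoly_iff_isMinimalPair_general {K : Type*} [Field K] {Γ : Type*}
    [AddCommGroup Γ] [LinearOrder Γ] [IsOrderedAddMonoid Γ] [Module ℚ Γ]
    {L : Type*} [Field L] [Algebra K L] [IsAlgClosure K L]
    (ν : AddValuation (Polynomial K) (WithTop Γ)) (μ : AddValuation (Polynomial L) (WithTop Γ))
    (hν : TrivialSupport ν) (hμ : TrivialSupport μ) (hext : IsExtension μ ν)
    (Q : Polynomial K) (hQmonic : Q.Monic) (hQirr : Irreducible Q)
    (a : L) (ha : Polynomial.aeval a Q = 0)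
    (hamax : μ (X - C a) = ((delta μ Q : Γ) : WithTop Γ)) :
    IsKeyPoly ν Q ↔ IsMinimalPair K μ a (delta μ Q) := by
  have : IsAlgClosed L := IsAlgClosure.isAlgClosed K
  have hεδ : ∀ g : K[X], 0 < g.natDegree → eps ν g = delta μ g := fun g hg =>
    eps_eq_delta hν hμ hext hg
  have hQ : minpoly K a = Q := (minpoly.eq_of_irreducible_of_monic hQirr ha hQmonic).symm
  have hQδ : ∀ b : L, ((delta μ Q : Γ) : WithTop Γ) ≤ μ (C (b - a)) ↔
      ((delta μ Q : Γ) : WithTop Γ) ≤ μ (X - C b) := fun b => μ.le_map_C_sub_iff hamax.ge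
  constructor
  · rintro ⟨-, -, hkey⟩ b hb
    have hbK : IsIntegral K b := (Algebra.IsAlgebraic.isAlgebraic b).isIntegral
    rw [hQ]
    refine hkey _ (minpoly.natDegree_pos hbK) ?_
    rw [hεδ Q hQirr.natDegree_pos, hεδ _ (minpoly.natDegree_pos hbK), ← WithTop.coe_le_coe]
    exact ((hQδ b).mp hb).trans
      (map_X_sub_C_le_delta hμ (minpoly.ne_zero hbK) (minpoly.aeval K b))
  · refine fun hmin => ⟨hQmonic, hQirr.natDegree_pos, fun g hg hQg => ?_⟩
    obtain ⟨c, hc, hcδ⟩ := exists_root_map_X_sub_C_eq_delta hμ hg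
    rw [hεδ Q hQirr.natDegree_pos, hεδ g hg, ← WithTop.coe_le_coe, ← hcδ, ← hQδ] at hQg
    exact (hQ ▸ hmin c hQg).trans
      (natDegree_le_of_dvd (minpoly.dvd K c hc) (ne_zero_of_natDegree_gt hg))

/-- Let `Q ∈ K[x]` be monic irreducible and `a` a root of `Q` with
`μ(x - a) = δ(Q)`. Then `Q` is a key polynomial for `ν` if and only if `(a, δ(Q))` is a
minimal pair for `ν`. -/
theorem isKeyPoly_iff_isMinimalPair {K : Type*} [Field K] {Γ : Type*}
    [AddCommGroup Γ] [LinearOrder Γ] [IsOrderedAddMonoid Γ] [Module ℚ Γ] [PosSMulStrictMono ℚ Γ]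
    {L : Type*} [Field L] [Algebra K L] [IsAlgClosure K L]
    (ν : AddValuation (Polynomial K) (WithTop Γ)) (μ : AddValuation (Polynomial L) (WithTop Γ))
    (hν : TrivialSupport ν) (hμ : TrivialSupport μ) (hext : IsExtension μ ν)
    (Q : Polynomial K) (hQmonic : Q.Monic) (hQirr : Irreducible Q)
    (a : L) (ha : Polynomial.aeval a Q = 0)
    (hamax : μ (X - C a) = ((delta μ Q : Γ) : WithTop Γ)) :
    IsKeyPoly ν Q ↔ IsMinimalPair K μ a (delta μ Q) :=
  isKeyPoly_iff_isMinimalPair_general ν μ hν hμ hext Q hQmonic hQirr a ha hamax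
end

section
/- Let K be a field and ν a valuation on K[x] with trivial support, extended to K(x). Suppose ν = ν_q for some q ∈ K[x] and that ν(q) is torsion over νK, i.e., there exist a ∈ K× and a positive integer n with ν(qⁿ/a) = 0. Then the residue (qⁿ/a)ν is transcendental over the residue field Kν; in particular ν is residue-transcendental. -/
open Polynomial

/-! Put `g = qⁿ/a` and take `c₀, …, c_N` in the valuation ring of `K` with `c_{i₀}` a unit.
Clearing denominators, `aᴺ · Σ cᵢ gⁱ = P(qⁿ)` for `P = Σ cᵢ a^{N-i} Xⁱ`, so the `q`-expansion of
`P(qⁿ)` has the constant coefficients `cᵢ a^{N-i}` in the degrees `n i`. Since `n ν(q) = ν(a)`,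
the term of degree `n i₀` has value `N ν(a)`, hence `ν(P(qⁿ)) = ν_q(P(qⁿ)) ≤ N ν(a)`, that is,
`w(Σ cᵢ gⁱ) ≤ 0`. The reverse inequality is the ultrametric inequality, so the residue of `g`
satisfies no nontrivial algebraic equation over `Kν`. -/

namespace Polynomial

variable {K : Type*} [Field K]

theorem div_mod_unique {p q : K[X]} (E D : K[X]) (h : D + q * E = p ∧ D.degree < q.degree) :
    p / q = E ∧ p % q = D := by
  obtain ⟨rfl, hD⟩ := h
  have hq : q ≠ 0 := by
    rintro rfl
    simp at hD
  have hmod : (D + q * E) % q = D := by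
    rw [add_mod, (mod_eq_self_iff hq).2 hD, EuclideanDomain.mod_eq_zero.2 (dvd_mul_right q E),
      add_zero]
  refine ⟨mul_left_cancel₀ hq ?_, hmod⟩
  have := EuclideanDomain.div_add_mod (D + q * E) q
  rw [hmod] at this
  linear_combination this

end Polynomial

section Truncation

variable {K : Type*} [Field K] {Γ : Type*} [AddCommGroup Γ] [LinearOrder Γ] [IsOrderedAddMonoid Γ]

theorem qCoeff_comp {q : K[X]} (hq : 0 < q.degree) (j : ℕ) (P : K[X]) :
    qCoeff q j (P.comp q) = C (P.coeff j) := by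
  have hexp : ∀ P : K[X], P.comp q = C (P.coeff 0) + q * P.divX.comp q := fun P => by
    conv_lhs => rw [← X_mul_divX_add P]
    simp only [add_comp, mul_comp, X_comp, C_comp]
    ring
  have hdiv : ∀ P : K[X], P.comp q / q = P.divX.comp q ∧ P.comp q % q = C (P.coeff 0) :=
    fun P => div_mod_unique _ _ ⟨(hexp P).symm, degree_C_le.trans_lt hq⟩
  induction j generalizing P with
  | zero => exact (hdiv P).2
  | succ j ih => rw [qCoeff, (hdiv P).1, ih, coeff_divX]

variable (ν : AddValuation K[X] (WithTop Γ)) {q : K[X]}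

theorem trunc_comp_le (hq : 0 < q.natDegree) (P : K[X]) (j : ℕ) :
    trunc ν q (P.comp q) ≤ ν (C (P.coeff j) * q ^ j) := by
  by_cases hj : P.coeff j = 0
  · simp [hj]
  rw [← qCoeff_comp (natDegree_pos_iff_degree_pos.1 hq)]
  refine Finset.inf_le (Finset.mem_range_succ_iff.2 ?_)
  rw [natDegree_comp]
  exact (le_natDegree_of_ne_zero hj).trans (Nat.le_mul_of_pos_right _ hq)

theorem map_comp_pow_le_of_eq_trunc (hq : 0 < q.natDegree) (htr : ∀ p, ν p = trunc ν q p)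
    {n : ℕ} (hn : 0 < n) (P : K[X]) (i : ℕ) :
    ν (P.comp (q ^ n)) ≤ ν (C (P.coeff i) * q ^ (n * i)) := by
  have : P.comp (q ^ n) = (expand K n P).comp q := by
    rw [expand_eq_comp_X_pow, comp_assoc, X_pow_comp]
  rw [this, htr, ← coeff_expand_mul' hn P i]
  exact trunc_comp_le ν hq _ _

end Truncation

section ResidueTranscendence

variable {K : Type*} [Field K] {Γ : Type*} [AddCommGroup Γ] [LinearOrder Γ] [IsOrderedAddMonoid Γ]

theorem algebraMap_homogenization_comp_pow (q : K[X]) (n N : ℕ) (c : ℕ → K) {a : K} (ha : a ≠ 0) :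
    algebraMap K[X] (RatFunc K)
        ((∑ i ∈ Finset.range (N + 1), C (c i * a ^ (N - i)) * X ^ i).comp (q ^ n)) =
      algebraMap K (RatFunc K) a ^ N * ∑ i ∈ Finset.range (N + 1),
        algebraMap K (RatFunc K) (c i) *
          (algebraMap K[X] (RatFunc K) (q ^ n) / algebraMap K (RatFunc K) a) ^ i := by
  have ha' : algebraMap K (RatFunc K) a ≠ 0 := by simpa using ha
  have hC : ∀ x : K, algebraMap K[X] (RatFunc K) (C x) = algebraMap K (RatFunc K) x := fun x => by
    rw [← algebraMap_eq, ← IsScalarTower.algebraMap_apply]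
  simp only [sum_comp, mul_comp, C_comp, X_pow_comp, map_sum, Finset.mul_sum]
  refine Finset.sum_congr rfl fun i hi => ?_
  obtain ⟨k, rfl⟩ := Nat.exists_eq_add_of_le (Finset.mem_range_succ_iff.1 hi)
  simp only [map_mul, map_pow, hC, Nat.add_sub_cancel_left, div_pow]
  field_simp
  ring

theorem sum_le_zero_of_eq_trunc (ν : AddValuation K[X] (WithTop Γ))
    {w : AddValuation (RatFunc K) (WithTop Γ)} (hw : ExtendsToRatFunc w ν) {q : K[X]}
    (hq : 0 < q.natDegree) (htr : ∀ p, ν p = trunc ν q p) {a : K} (ha : a ≠ 0) {n : ℕ} (hn : 0 < n)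
    (hval : w (algebraMap K[X] (RatFunc K) (q ^ n) / algebraMap K (RatFunc K) a) = 0)
    {N i₀ : ℕ} {c : ℕ → K} (hi₀N : i₀ ≤ N) (hi₀ : w (algebraMap K (RatFunc K) (c i₀)) = 0) :
    w (∑ i ∈ Finset.range (N + 1), algebraMap K (RatFunc K) (c i) *
      (algebraMap K[X] (RatFunc K) (q ^ n) / algebraMap K (RatFunc K) a) ^ i) ≤ 0 := by
  set P : K[X] := ∑ i ∈ Finset.range (N + 1), C (c i * a ^ (N - i)) * X ^ i
  have hwC : ∀ x : K, ν (C x) = w (algebraMap K (RatFunc K) x) := fun x => by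
    rw [← hw, ← algebraMap_eq, ← IsScalarTower.algebraMap_apply]
  have hwa : w (algebraMap K (RatFunc K) a ^ N) ≠ ⊤ :=
    (AddValuation.ne_top_iff w).2 (pow_ne_zero _ (by simpa using ha))
  have hwq : n • ν q = w (algebraMap K (RatFunc K) a) := by
    rw [← AddValuation.map_pow, ← hw, ← div_mul_cancel₀ (algebraMap K[X] (RatFunc K) (q ^ n))
      (show algebraMap K (RatFunc K) a ≠ 0 by simpa using ha), AddValuation.map_mul, hval, zero_add]
  have hcoeff : P.coeff i₀ = c i₀ * a ^ (N - i₀) := by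
    simp only [P, finsetSum_coeff, coeff_C_mul_X_pow]
    rw [Finset.sum_ite_eq]
    simp [Nat.lt_succ_of_le hi₀N]
  have hterm : ν (C (P.coeff i₀) * q ^ (n * i₀)) = w (algebraMap K (RatFunc K) a ^ N) := by
    rw [hcoeff, C_mul, C_pow, AddValuation.map_mul, AddValuation.map_mul, AddValuation.map_pow,
      AddValuation.map_pow, hwC, hwC, hi₀, zero_add, mul_nsmul, hwq, ← add_nsmul,
      Nat.sub_add_cancel hi₀N, AddValuation.map_pow]
  have hle := map_comp_pow_le_of_eq_trunc ν hq htr hn P i₀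
  rw [hterm, ← hw, algebraMap_homogenization_comp_pow q n N c ha, AddValuation.map_mul] at hle
  exact (WithTop.add_le_add_iff_left hwa).1 (by rwa [add_zero])

end ResidueTranscendence

theorem residueTranscendental_of_trunc_eq_of_torsion_general {K : Type*} [Field K] {Γ : Type*}
    [AddCommGroup Γ] [LinearOrder Γ] [IsOrderedAddMonoid Γ]
    (ν : AddValuation (Polynomial K) (WithTop Γ)) (w : AddValuation (RatFunc K) (WithTop Γ))
    (hw : ExtendsToRatFunc w ν)
    (q : Polynomial K) (hq : 0 < q.natDegree) (htr : ∀ p : Polynomial K, ν p = trunc ν q p)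
    (a : K) (ha : a ≠ 0) (n : ℕ) (hn : 0 < n)
    (hval : w (algebraMap (Polynomial K) (RatFunc K) (q ^ n) / algebraMap K (RatFunc K) a) = 0) :
    ResidueTranscendentalElem w
        (algebraMap (Polynomial K) (RatFunc K) (q ^ n) / algebraMap K (RatFunc K) a) ∧
      IsResidueTranscendental w := by
  have key : ResidueTranscendentalElem w
      (algebraMap (Polynomial K) (RatFunc K) (q ^ n) / algebraMap K (RatFunc K) a) := by
    rintro N c hc ⟨i₀, hi₀N, hi₀⟩
    refine le_antisymm (sum_le_zero_of_eq_trunc ν hw hq htr ha hn hval hi₀N hi₀) ?_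
    refine AddValuation.map_le_sum w fun i hi => ?_
    rw [AddValuation.map_mul, AddValuation.map_pow, hval, nsmul_zero, add_zero]
    exact hc i (Finset.mem_range_succ_iff.1 hi)
  exact ⟨key, _, hval, key⟩

/-- Suppose `ν = ν_q` and `ν(q)` is torsion over `νK`, i.e. there are
`a ∈ K^×` and `n ≥ 1` with `w(qⁿ/a) = 0`. Then the residue `(qⁿ/a)ν` is transcendental
over `Kν`; in particular `ν` is residue-transcendental. -/
theorem residueTranscendental_of_trunc_eq_of_torsion {K : Type*} [Field K] {Γ : Type*}
    [AddCommGroup Γ] [LinearOrder Γ] [IsOrderedAddMonoid Γ]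
    (ν : AddValuation (Polynomial K) (WithTop Γ)) (w : AddValuation (RatFunc K) (WithTop Γ))
    (hν : TrivialSupport ν) (hw : ExtendsToRatFunc w ν)
    (q : Polynomial K) (hq : 0 < q.natDegree) (htr : ∀ p : Polynomial K, ν p = trunc ν q p)
    (a : K) (ha : a ≠ 0) (n : ℕ) (hn : 0 < n)
    (hval : w (algebraMap (Polynomial K) (RatFunc K) (q ^ n) / algebraMap K (RatFunc K) a) = 0) :
    ResidueTranscendentalElem w
        (algebraMap (Polynomial K) (RatFunc K) (q ^ n) / algebraMap K (RatFunc K) a) ∧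
      IsResidueTranscendental w :=
  residueTranscendental_of_trunc_eq_of_torsion_general ν w hw q hq htr a ha n hn hval
end

section
/- Let K be a field, ν a valuation on K[x] with trivial support, K̄ an algebraic closure of K, μ and μ' two extensions of ν to K̄[x], and f ∈ K[x] a monic polynomial. Then max{μ(x−a) : a a root of f in K̄} = max{μ'(x−a) : a a root of f in K̄}; that is, δ(f) does not depend on the choice of the extension of ν to K̄[x]. -/
open Polynomial

/-! If every root `a` of `f` satisfies `μ(x - a) ≤ d`, the Leibniz rule for Hasse derivatives
gives `μ f ≤ μ (∂_r f) + r • d` for all `r`. For `d = δ(f)` equality holds at `r = m`, the number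
of roots with `μ(x - a) = δ(f)`. Hence `δ(f)` is the least such `d`, i.e. `δ(f) = ε(f)`, and the
values `μ f`, `μ (∂_r f)` are the values under `ν` of polynomials over `K`. -/

namespace Polynomial

theorem hasseDeriv_map_s14 {R S : Type*} [Semiring R] [Semiring S] (φ : R →+* S) (p : R[X])
    (k : ℕ) : (p.map φ).hasseDeriv k = (p.hasseDeriv k).map φ := by
  ext n
  simp [hasseDeriv_coeff]

theorem hasseDeriv_X_sub_C_of_one_lt {R : Type*} [Ring R] (b : R) {r : ℕ} (hr : 1 < r) :
    (X - C b).hasseDeriv r = 0 := by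
  rw [map_sub, hasseDeriv_X r hr, hasseDeriv_C r b (by omega), sub_zero]

end Polynomial

section HasseSlope

variable {Γ : Type*} [AddCommGroup Γ] [LinearOrder Γ] [IsOrderedAddMonoid Γ]

namespace AddValuation

variable {R : Type*} [Ring R] (v : AddValuation R (WithTop Γ)) {ι : Type*} {s : Finset ι}
  {f : ι → R} {a : WithTop Γ} {c : Γ}

theorem le_map_sum_add_coe (h : ∀ i ∈ s, a ≤ v (f i) + c) : a ≤ v (∑ i ∈ s, f i) + c := by
  refine Finset.sum_induction f (fun x => a ≤ v x + c) (fun x y hx hy => ?_) (by simp) h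
  calc a ≤ min (v x) (v y) + c := by rw [← min_add_add_right]; exact le_min hx hy
    _ ≤ v (x + y) + c := by gcongr; exact v.map_add x y

theorem lt_map_sum_add_coe (ha : a ≠ ⊤) (h : ∀ i ∈ s, a < v (f i) + c) :
    a < v (∑ i ∈ s, f i) + c := by
  refine Finset.sum_induction f (fun x => a < v x + c) (fun x y hx hy => ?_)
    (by simpa [lt_top_iff_ne_top]) h
  calc a < min (v x) (v y) + c := by rw [← min_add_add_right]; exact lt_min hx hy
    _ ≤ v (x + y) + c := by gcongr; exact v.map_add x y

end AddValuation

variable {R : Type*} [CommRing R] (μ : AddValuation R[X] (WithTop Γ))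

/-- `(μ p - μ ∂_r p) / r ≤ d` for every `r ≥ 1`, i.e. `ε(p) ≤ d`, written without division. -/
def HasseSlopeLE (d : Γ) (p : R[X]) : Prop :=
  ∀ r : ℕ, μ p ≤ μ (p.hasseDeriv r) + (r • d : Γ)

def HasseSlopeLT (d : Γ) (p : R[X]) : Prop :=
  μ p ≠ ⊤ ∧ ∀ r : ℕ, 0 < r → μ p < μ (p.hasseDeriv r) + (r • d : Γ)

variable {μ} {d : Γ} {p q : R[X]}

theorem HasseSlopeLT.hasseSlopeLE (hp : HasseSlopeLT μ d p) : HasseSlopeLE μ d p := by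
  intro r
  rcases r.eq_zero_or_pos with rfl | hr
  · simp
  · exact (hp.2 r hr).le

theorem hasseSlopeLE_one : HasseSlopeLE μ d 1 := by
  intro r
  rcases r.eq_zero_or_pos with rfl | hr
  · simp
  · simp [hasseDeriv_apply_one r hr]

theorem hasseSlopeLT_one : HasseSlopeLT μ d 1 :=
  ⟨by simp, fun r hr => by simp [hasseDeriv_apply_one r hr]⟩

theorem hasseSlopeLE_X_sub_C {b : R} (hb : μ (X - C b) ≤ d) : HasseSlopeLE μ d (X - C b) := by
  rintro (_ | _ | r)
  · simp
  · simpa [hasseDeriv_one'] using hb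
  · simp [hasseDeriv_X_sub_C_of_one_lt b (by omega : 1 < r + 2)]

theorem hasseSlopeLT_X_sub_C {b : R} (hb : μ (X - C b) < d) : HasseSlopeLT μ d (X - C b) := by
  refine ⟨hb.ne_top, ?_⟩
  rintro (_ | _ | r) hr
  · omega
  · simpa [hasseDeriv_one'] using hb
  · simp [hasseDeriv_X_sub_C_of_one_lt b (by omega : 1 < r + 2), lt_top_iff_ne_top, hb.ne_top]

theorem val_hasseDeriv_mul_hasseDeriv_add (i j : ℕ) :
    μ (p.hasseDeriv i * q.hasseDeriv j) + ((i + j) • d : Γ) =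
      (μ (p.hasseDeriv i) + (i • d : Γ)) + (μ (q.hasseDeriv j) + (j • d : Γ)) := by
  rw [μ.map_mul, add_nsmul, WithTop.coe_add]
  abel

theorem HasseSlopeLE.mul (hp : HasseSlopeLE μ d p) (hq : HasseSlopeLE μ d q) :
    HasseSlopeLE μ d (p * q) := by
  intro r
  rw [hasseDeriv_mul]
  refine μ.le_map_sum_add_coe fun ij hij => ?_
  rw [← Finset.HasAntidiagonal.mem_antidiagonal.mp hij, val_hasseDeriv_mul_hasseDeriv_add,
    μ.map_mul]
  exact add_le_add (hp _) (hq _)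

theorem HasseSlopeLT.mul (hp : HasseSlopeLT μ d p) (hq : HasseSlopeLT μ d q) :
    HasseSlopeLT μ d (p * q) := by
  have hpq : μ (p * q) ≠ ⊤ := by simpa [μ.map_mul] using And.intro hp.1 hq.1
  refine ⟨hpq, fun r hr => ?_⟩
  rw [hasseDeriv_mul]
  refine μ.lt_map_sum_add_coe hpq fun ij hij => ?_
  have hij := Finset.HasAntidiagonal.mem_antidiagonal.mp hij
  rw [← hij, val_hasseDeriv_mul_hasseDeriv_add, μ.map_mul]
  rcases ij.1.eq_zero_or_pos with h1 | h1
  · exact WithTop.add_lt_add_of_le_of_lt hp.1 (hp.hasseSlopeLE _) (hq.2 _ (by omega))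
  · exact WithTop.add_lt_add_of_lt_of_le hq.1 (hp.2 _ h1) (hq.hasseSlopeLE _)

end HasseSlope

section Roots

variable {Γ : Type*} [AddCommGroup Γ] [LinearOrder Γ] [IsOrderedAddMonoid Γ]
  {R : Type*} [CommRing R] {μ : AddValuation R[X] (WithTop Γ)} {d : Γ} {s : Multiset R}

theorem hasseSlopeLE_prod_X_sub_C (hs : ∀ b ∈ s, μ (X - C b) ≤ d) :
    HasseSlopeLE μ d (s.map (X - C ·)).prod :=
  Multiset.prod_induction _ _ (fun _ _ => HasseSlopeLE.mul) hasseSlopeLE_one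
    (Multiset.forall_mem_map_iff.mpr fun b hb => hasseSlopeLE_X_sub_C (hs b hb))

theorem hasseSlopeLT_prod_X_sub_C (hs : ∀ b ∈ s, μ (X - C b) < d) :
    HasseSlopeLT μ d (s.map (X - C ·)).prod :=
  Multiset.prod_induction _ _ (fun _ _ => HasseSlopeLT.mul) hasseSlopeLT_one
    (Multiset.forall_mem_map_iff.mpr fun b hb => hasseSlopeLT_X_sub_C (hs b hb))

theorem val_prod_X_sub_C_of_forall_eq (hs : ∀ b ∈ s, μ (X - C b) = d) :
    μ (s.map (X - C ·)).prod = (Multiset.card s • d : Γ) := by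
  induction s using Multiset.induction_on with
  | empty => simp
  | cons b s ih =>
    rw [Multiset.map_cons, Multiset.prod_cons, μ.map_mul, Multiset.card_cons, succ_nsmul',
      WithTop.coe_add, hs b (Multiset.mem_cons_self b s),
      ih fun c hc => hs c (Multiset.mem_cons_of_mem hc)]

theorem val_prod_X_sub_C_ne_top (hs : ∀ b ∈ s, μ (X - C b) ≠ ⊤) :
    μ (s.map (X - C ·)).prod ≠ ⊤ :=
  Multiset.prod_induction (μ · ≠ ⊤) _ (fun _ _ ha hb => by simpa [μ.map_mul] using ⟨ha, hb⟩)
    (by simp) (Multiset.forall_mem_map_iff.mpr hs)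

/-- Split the roots into the `m` roots with `μ (X - C b) = d`, with product `g`, and the rest,
with product `h`: in the Leibniz expansion of `∂_m (g * h)` the term `∂_m g * h = h` has
value `μ h` and all other terms have strictly larger value. -/
theorem exists_val_prod_X_sub_C_eq [Nontrivial R] (hle : ∀ b ∈ s, μ (X - C b) ≤ d)
    (hex : ∃ b ∈ s, μ (X - C b) = d) :
    ∃ m : ℕ, 0 < m ∧ μ (s.map (X - C ·)).prod =
      μ ((s.map (X - C ·)).prod.hasseDeriv m) + (m • d : Γ) := by
  classical
  set s₁ := s.filter (fun b => μ (X - C b) = d)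
  set s₂ := s.filter (fun b => μ (X - C b) ≠ d)
  set m := Multiset.card s₁
  set g := (s₁.map (X - C ·)).prod
  set h := (s₂.map (X - C ·)).prod
  have hgh : (s.map (X - C ·)).prod = g * h := by
    rw [← Multiset.filter_add_not (fun b => μ (X - C b) = d) s, Multiset.map_add,
      Multiset.prod_add]
  have hμg : μ g = (m • d : Γ) :=
    val_prod_X_sub_C_of_forall_eq fun b hb => (Multiset.mem_filter.mp hb).2
  have hm : 0 < m := by
    obtain ⟨b, hb, hbd⟩ := hex
    exact Multiset.card_pos_iff_exists_mem.mpr ⟨b, Multiset.mem_filter.mpr ⟨hb, hbd⟩⟩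
  have hg : HasseSlopeLE μ d g :=
    hasseSlopeLE_prod_X_sub_C fun b hb => (Multiset.mem_filter.mp hb).2.le
  have hh : HasseSlopeLT μ d h :=
    hasseSlopeLT_prod_X_sub_C fun b hb =>
      (hle b (Multiset.mem_of_mem_filter hb)).lt_of_ne (Multiset.mem_filter.mp hb).2
  have hgm : g.hasseDeriv m = 1 := by
    have hdeg : g.natDegree = m := natDegree_multiset_prod_X_sub_C_eq_card s₁
    have hmonic : g.Monic := monic_multiset_prod_of_monic _ _ fun b _ => monic_X_sub_C b
    rw [← hdeg, hasseDeriv_natDegree_eq_C, hmonic.leadingCoeff, C_1]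
  have hμ : μ ((g * h).hasseDeriv m) = μ h := by
    have hm0 : (m, 0) ∈ Finset.HasAntidiagonal.antidiagonal m := by simp
    rw [hasseDeriv_mul, ← Finset.add_sum_erase _ _ hm0, hgm, hasseDeriv_zero', one_mul]
    refine μ.map_add_eq_of_lt_left (μ.map_lt_sum hh.1 fun ij hij => ?_)
    obtain ⟨hne, hij⟩ := Finset.mem_erase.mp hij
    have hij := Finset.HasAntidiagonal.mem_antidiagonal.mp hij
    have hj : 0 < ij.2 := Nat.pos_of_ne_zero fun hj => hne (Prod.ext (by omega) hj)
    refine (WithTop.add_lt_add_iff_right (WithTop.coe_ne_top (a := m • d))).mp ?_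
    calc μ h + (m • d : Γ) = μ g + μ h := by rw [hμg, add_comm]
      _ < (μ (g.hasseDeriv ij.1) + (ij.1 • d : Γ)) + (μ (h.hasseDeriv ij.2) + (ij.2 • d : Γ)) :=
        WithTop.add_lt_add_of_le_of_lt (hμg ▸ WithTop.coe_ne_top) (hg _) (hh.2 _ hj)
      _ = μ (g.hasseDeriv ij.1 * h.hasseDeriv ij.2) + (m • d : Γ) := by
        rw [← hij, val_hasseDeriv_mul_hasseDeriv_add]
  exact ⟨m, hm, by rw [hgh, hμ, μ.map_mul, hμg, add_comm]⟩

theorem isLeast_hasseSlopeLE_prod_X_sub_C [Nontrivial R] (hle : ∀ b ∈ s, μ (X - C b) ≤ d)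
    (hex : ∃ b ∈ s, μ (X - C b) = d) :
    IsLeast {γ : Γ | HasseSlopeLE μ γ (s.map (X - C ·)).prod} d := by
  refine ⟨hasseSlopeLE_prod_X_sub_C hle, fun γ hγ => not_lt.mp fun hγd => ?_⟩
  obtain ⟨m, hm, heq⟩ := exists_val_prod_X_sub_C_eq hle hex
  have hfin : μ (s.map (X - C ·)).prod ≠ ⊤ :=
    val_prod_X_sub_C_ne_top fun b hb => ne_top_of_le_ne_top WithTop.coe_ne_top (hle b hb)
  have hD : μ ((s.map (X - C ·)).prod.hasseDeriv m) ≠ ⊤ := fun h => hfin (by rw [heq, h, top_add])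
  have hmγ := hγ m
  rw [heq, WithTop.add_le_add_iff_left hD, WithTop.coe_le_coe] at hmγ
  exact (nsmul_lt_nsmul_right hm.ne' hγd).not_ge hmγ

end Roots

section Extension

variable {Γ : Type*} [AddCommGroup Γ] [LinearOrder Γ] [IsOrderedAddMonoid Γ]
  {K : Type*} [Field K] {L : Type*} [Field L] [Algebra K L]
  {ν : AddValuation K[X] (WithTop Γ)} {μ : AddValuation L[X] (WithTop Γ)}

theorem IsExtension.hasseSlopeLE_map_iff (hext : IsExtension μ ν) {d : Γ} {f : K[X]} :
    HasseSlopeLE μ d (f.map (algebraMap K L)) ↔ HasseSlopeLE ν d f := by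
  simp only [HasseSlopeLE, hasseDeriv_map_s14]
  exact forall_congr' fun r => by rw [hext, hext]

theorem coe_aval {p : L[X]} (hp : μ p ≠ ⊤) : ((aval μ p : Γ) : WithTop Γ) = μ p := by
  obtain ⟨γ, hγ⟩ := WithTop.ne_top_iff_exists.mp hp
  rw [aval, ← hγ, WithTop.untopD_coe]

theorem isLeast_delta [IsAlgClosed L] (hμ : TrivialSupport μ) (hext : IsExtension μ ν)
    {f : K[X]} (hf : f.Monic) (hdeg : 0 < f.natDegree) :
    IsLeast {γ : Γ | HasseSlopeLE ν γ f} (delta μ f) := by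
  let := Classical.decEq L -- `delta` is defined with this instance
  set F := f.map (algebraMap K L)
  have hF : F = (F.roots.map (X - C ·)).prod :=
    (IsAlgClosed.splits F).eq_prod_roots_of_monic (hf.map _)
  have hne : F.roots.toFinset.Nonempty := by
    obtain ⟨b, hb⟩ := IsAlgClosed.exists_root F <| by
      rw [degree_map]; exact (natDegree_pos_iff_degree_pos.mp hdeg).ne'
    exact ⟨b, Multiset.mem_toFinset.mpr ((mem_roots (hf.map _).ne_zero).mpr hb)⟩
  have hval : ∀ b, μ (X - C b) = aval μ (X - C b) := fun b =>
    (coe_aval fun h => X_sub_C_ne_zero b (hμ _ h)).symm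
  have hδ : delta μ f = F.roots.toFinset.sup' hne fun a => aval μ (X - C a) := dif_pos hne
  have hset : {γ : Γ | HasseSlopeLE ν γ f} = {γ : Γ | HasseSlopeLE μ γ F} :=
    Set.ext fun _ => hext.hasseSlopeLE_map_iff.symm
  rw [hset, hF]
  refine isLeast_hasseSlopeLE_prod_X_sub_C (fun b hb => ?_) ?_
  · rw [hval, hδ, WithTop.coe_le_coe]
    exact Finset.le_sup' (fun a => aval μ (X - C a)) (Multiset.mem_toFinset.mpr hb)
  · obtain ⟨b, hb, hbδ⟩ := Finset.exists_mem_eq_sup' hne fun a => aval μ (X - C a)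
    exact ⟨b, Multiset.mem_toFinset.mp hb, by rw [hval, hδ, hbδ]⟩

end Extension

theorem delta_independent_of_extension_general {K : Type*} [Field K] {Γ : Type*}
    [AddCommGroup Γ] [LinearOrder Γ] [IsOrderedAddMonoid Γ]
    {L : Type*} [Field L] [Algebra K L] [IsAlgClosure K L]
    (ν : AddValuation (Polynomial K) (WithTop Γ))
    (μ μ' : AddValuation (Polynomial L) (WithTop Γ))
    (hμ : TrivialSupport μ) (hμ' : TrivialSupport μ')
    (hext : IsExtension μ ν) (hext' : IsExtension μ' ν)
    (f : Polynomial K) (hf : f.Monic) (hdeg : 0 < f.natDegree) :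
    delta μ f = delta μ' f := by
  have := IsAlgClosure.isAlgClosed K (K := L)
  exact (isLeast_delta hμ hext hf hdeg).unique (isLeast_delta hμ' hext' hf hdeg)

/-- If `μ` and `μ'` are two extensions of `ν` to `K̄[x]`, then for every
monic `f ∈ K[x]` one has `max{μ(x - a) : a root of f} = max{μ'(x - a) : a root of f}`;
that is, `δ(f)` does not depend on the choice of the extension of `ν`. -/
theorem delta_independent_of_extension {K : Type*} [Field K] {Γ : Type*}
    [AddCommGroup Γ] [LinearOrder Γ] [IsOrderedAddMonoid Γ]
    {L : Type*} [Field L] [Algebra K L] [IsAlgClosure K L]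
    (ν : AddValuation (Polynomial K) (WithTop Γ))
    (μ μ' : AddValuation (Polynomial L) (WithTop Γ))
    (hν : TrivialSupport ν) (hμ : TrivialSupport μ) (hμ' : TrivialSupport μ')
    (hext : IsExtension μ ν) (hext' : IsExtension μ' ν)
    (f : Polynomial K) (hf : f.Monic) (hdeg : 0 < f.natDegree) :
    delta μ f = delta μ' f :=
  delta_independent_of_extension_general ν μ μ' hμ hμ' hext hext' f hf hdeg
end
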